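/- arXiv:2302.07073 — 2 statements merged into one kernel-verified Lean document; each statement's English description precedes it below -/
import Mathlib

section
/- There is an absolute constant C > 0 such that for all real x ≥ 2, with c := 1 + 1/log x, for all real T and all complex ρ = β + iγ with 0 ≤ β ≤ 1 and |γ − T| < 1, one has | ∫_{1−c}^{c} x^{σ+iT}/(σ + iT − ρ) dσ | ≤ C·x·log log(2x), where the integral is over the real variable σ ∈ [1−c, c] (interpreted as a contour integral along the horizontal segment from 1−c+iT to c+iT, assuming ρ does not lie on this segment). -/
/-!
Write the integrand as `N σ / (σ - z)` with `N σ = x ^ (σ + iT)` and `z = ρ - iT`, so that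
`‖N σ‖ = x ^ σ ≤ e x` on the segment and `β = Re z ∈ [0, 1]`. Cut the segment at `β ± δ`, where
`δ = 1 / log x`. On the two outer pieces `‖σ - z‖ ≥ |σ - β| ≥ δ`, and integrating `e x / |σ - β|`
gives `e x log (1 + log x)` each. On the middle piece write `N σ = N β + (N σ - N β)`: the
constant part integrates to `N β` times a difference of logarithms of two points of equal modulus,
of size at most `2π`, and `‖N σ - N β‖ ≤ 2 x log x |σ - β|` bounds the rest by `2 x log x` over an
interval of length `2δ`. Finally `log (1 + log x) ≤ log 2 + log log 2x` and `log log 2x ≥ 1/4`.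
-/

open Complex Set intervalIntegral MeasureTheory
open scoped Real

theorem abs_sub_re_le_norm_ofReal_sub (σ : ℝ) (z : ℂ) : |σ - z.re| ≤ ‖(σ : ℂ) - z‖ := by
  simpa using abs_re_le_norm ((σ : ℂ) - z)

theorem ofReal_sub_ne_zero {z : ℂ} (hz : z.im ≠ 0) (σ : ℝ) : (σ : ℂ) - z ≠ 0 := fun h =>
  hz (by simpa using congrArg im h)

theorem integral_inv_ofReal_sub {z : ℂ} (hz : z.im ≠ 0) (a b : ℝ) :
    ∫ σ in a..b, ((σ : ℂ) - z)⁻¹ = Complex.log (b - z) - Complex.log (a - z) := by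
  have hslit : ∀ σ : ℝ, (σ : ℂ) - z ∈ slitPlane := fun σ =>
    Or.inr (by simpa using hz)
  have hcont : Continuous fun σ : ℝ => ((σ : ℂ) - z)⁻¹ :=
    (by fun_prop : Continuous fun σ : ℝ => (σ : ℂ) - z).inv₀ fun σ => slitPlane_ne_zero (hslit σ)
  refine integral_eq_sub_of_hasDerivAt (f := fun σ : ℝ => Complex.log (σ - z))
    (fun σ _ => ?_) (hcont.intervalIntegrable a b)
  simpa using ((hasDerivAt_id (σ : ℂ)).sub_const z).clog (hslit σ) |>.comp_ofReal

theorem norm_integral_inv_ofReal_sub_le {z : ℂ} (hz : z.im ≠ 0) (δ : ℝ) :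
    ‖∫ σ in (z.re - δ)..(z.re + δ), ((σ : ℂ) - z)⁻¹‖ ≤ 2 * π := by
  have hnorm : ‖((z.re + δ : ℝ) : ℂ) - z‖ = ‖((z.re - δ : ℝ) : ℂ) - z‖ := by
    simp only [Complex.norm_def, normSq_apply, sub_re, sub_im, ofReal_re, ofReal_im]
    ring_nf
  rw [integral_inv_ofReal_sub hz,
    ← abs_im_eq_norm.2 (by rw [sub_re, log_re, log_re, hnorm, sub_self])]
  have hright := abs_le.1 (abs_arg_le_pi (((z.re + δ : ℝ) : ℂ) - z))
  have hleft := abs_le.1 (abs_arg_le_pi (((z.re - δ : ℝ) : ℂ) - z))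
  simp only [sub_im, log_im]
  rw [abs_le]
  constructor <;> linarith

section

variable {E : Type*} [NormedAddCommGroup E] [NormedSpace ℝ E] {f : ℝ → E} {β δ M : ℝ}

theorem norm_integral_le_mul_log_of_norm_le_div_sub {b : ℝ} (hδ : 0 < δ) (hb : β + δ ≤ b)
    (hM : 0 ≤ M) (hf : ∀ σ ∈ Icc (β + δ) b, ‖f σ‖ ≤ M / (σ - β)) :
    ‖∫ σ in (β + δ)..b, f σ‖ ≤ M * Real.log ((b - β) / δ) := by
  have hcont : ContinuousOn (fun σ => M / (σ - β)) (uIcc (β + δ) b) := by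
    rw [uIcc_of_le hb]
    exact continuousOn_const.div (by fun_prop) fun σ hσ => by linarith [hσ.1]
  have hint : ∫ σ in (β + δ)..b, M / (σ - β) = M * Real.log ((b - β) / δ) := by
    simp_rw [div_eq_mul_inv M, intervalIntegral.integral_const_mul,
      integral_comp_sub_right (fun u => u⁻¹), add_sub_cancel_left]
    rw [integral_inv_of_pos hδ (by linarith)]
  calc ‖∫ σ in (β + δ)..b, f σ‖ ≤ |∫ σ in (β + δ)..b, M / (σ - β)| :=
        norm_integral_le_abs_of_norm_le
          (ae_restrict_of_forall_mem measurableSet_uIoc fun σ hσ =>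
            hf σ (by rw [uIoc_of_le hb] at hσ; exact Ioc_subset_Icc_self hσ))
          hcont.intervalIntegrable
    _ = M * Real.log ((b - β) / δ) := by
        rw [hint, abs_of_nonneg (mul_nonneg hM (Real.log_nonneg ?_))]
        rw [le_div_iff₀ hδ]
        linarith

theorem norm_integral_le_mul_log_of_norm_le_div_sub' {a : ℝ} (hδ : 0 < δ) (ha : a ≤ β - δ)
    (hM : 0 ≤ M) (hf : ∀ σ ∈ Icc a (β - δ), ‖f σ‖ ≤ M / (β - σ)) :
    ‖∫ σ in a..(β - δ), f σ‖ ≤ M * Real.log ((β - a) / δ) := by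
  have := norm_integral_le_mul_log_of_norm_le_div_sub (f := fun σ => f (-σ)) (β := -β) (b := -a)
    hδ (by linarith) hM fun σ hσ => by
      simpa [sub_eq_add_neg, add_comm] using hf (-σ) ⟨by linarith [hσ.2], by linarith [hσ.1]⟩
  rwa [integral_comp_neg, neg_neg, neg_add, neg_neg, ← sub_eq_add_neg, sub_neg_eq_add,
    neg_add_eq_sub] at this

end

section

variable {N : ℝ → ℂ} {z : ℂ} {δ M A K : ℝ}

theorem norm_integral_div_ofReal_sub_near_le (hN : Continuous N) (hz : z.im ≠ 0)
    (hA : ‖N z.re‖ ≤ A) (hK : 0 ≤ K)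
    (hNK : ∀ σ ∈ Icc (z.re - δ) (z.re + δ), ‖N σ - N z.re‖ ≤ K * |σ - z.re|) (hδ : 0 ≤ δ) :
    ‖∫ σ in (z.re - δ)..(z.re + δ), N σ / ((σ : ℂ) - z)‖ ≤ 2 * π * A + 2 * δ * K := by
  have hden : Continuous fun σ : ℝ => (σ : ℂ) - z := by fun_prop
  have hsplit : ∫ σ in (z.re - δ)..(z.re + δ), N σ / ((σ : ℂ) - z) =
      N z.re * (∫ σ in (z.re - δ)..(z.re + δ), ((σ : ℂ) - z)⁻¹) +
        ∫ σ in (z.re - δ)..(z.re + δ), (N σ - N z.re) / ((σ : ℂ) - z) := by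
    have hinv : Continuous fun σ : ℝ => N z.re * ((σ : ℂ) - z)⁻¹ :=
      continuous_const.mul (hden.inv₀ (ofReal_sub_ne_zero hz))
    have hquot : Continuous fun σ : ℝ => (N σ - N z.re) / ((σ : ℂ) - z) :=
      (hN.sub continuous_const).div hden (ofReal_sub_ne_zero hz)
    rw [← intervalIntegral.integral_const_mul,
      ← integral_add (hinv.intervalIntegrable _ _) (hquot.intervalIntegrable _ _)]
    congr 1 with σ
    ring
  have hconst : ‖N z.re * ∫ σ in (z.re - δ)..(z.re + δ), ((σ : ℂ) - z)⁻¹‖ ≤ 2 * π * A := by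
    rw [norm_mul, mul_comm (2 * π)]
    exact mul_le_mul hA (norm_integral_inv_ofReal_sub_le hz δ) (norm_nonneg _)
      ((norm_nonneg _).trans hA)
  have hdiff : ‖∫ σ in (z.re - δ)..(z.re + δ), (N σ - N z.re) / ((σ : ℂ) - z)‖ ≤ 2 * δ * K := by
    have hpt : ∀ σ ∈ uIoc (z.re - δ) (z.re + δ), ‖(N σ - N z.re) / ((σ : ℂ) - z)‖ ≤ K := by
      intro σ hσ
      rw [uIoc_of_le (by linarith)] at hσ
      rw [norm_div, div_le_iff₀ (norm_pos_iff.2 (ofReal_sub_ne_zero hz σ))]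
      exact (hNK σ (Ioc_subset_Icc_self hσ)).trans
        (mul_le_mul_of_nonneg_left (abs_sub_re_le_norm_ofReal_sub σ z) hK)
    have := norm_integral_le_of_norm_le_const hpt
    rwa [show |z.re + δ - (z.re - δ)| = 2 * δ by rw [abs_of_nonneg (by linarith)]; ring,
      mul_comm K] at this
  rw [hsplit]
  exact (norm_add_le _ _).trans (add_le_add hconst hdiff)

theorem norm_integral_div_ofReal_sub_le {a b : ℝ} (hN : Continuous N) (hz : z.im ≠ 0)
    (hM : ∀ σ ∈ Icc a b, ‖N σ‖ ≤ M) (hA : ‖N z.re‖ ≤ A) (hK : 0 ≤ K)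
    (hNK : ∀ σ ∈ Icc (z.re - δ) (z.re + δ), ‖N σ - N z.re‖ ≤ K * |σ - z.re|) (hδ : 0 < δ)
    (ha : a ≤ z.re - δ) (hb : z.re + δ ≤ b) :
    ‖∫ σ in a..b, N σ / ((σ : ℂ) - z)‖ ≤
      M * Real.log ((z.re - a) / δ) + (2 * π * A + 2 * δ * K) + M * Real.log ((b - z.re) / δ) := by
  have hM0 : 0 ≤ M := (norm_nonneg _).trans (hM a ⟨le_rfl, by linarith⟩)
  have hint : ∀ c d, IntervalIntegrable (fun σ : ℝ => N σ / ((σ : ℂ) - z)) volume c d :=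
    fun c d => (hN.div (by fun_prop) (ofReal_sub_ne_zero hz)).intervalIntegrable c d
  have hfar : ∀ σ ∈ Icc a b, 0 < |σ - z.re| → ‖N σ / ((σ : ℂ) - z)‖ ≤ M / |σ - z.re| :=
    fun σ hσ hpos => by
      rw [norm_div]
      exact div_le_div₀ hM0 (hM σ hσ) hpos (abs_sub_re_le_norm_ofReal_sub σ z)
  have hleft := norm_integral_le_mul_log_of_norm_le_div_sub' hδ ha hM0 fun σ hσ => by
    have h : |σ - z.re| = z.re - σ := by rw [abs_sub_comm, abs_of_pos (by linarith [hσ.2])]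
    simpa only [h] using hfar σ ⟨hσ.1, by linarith [hσ.2]⟩ (by rw [h]; linarith [hσ.2])
  have hright := norm_integral_le_mul_log_of_norm_le_div_sub hδ hb hM0 fun σ hσ => by
    have h : |σ - z.re| = σ - z.re := abs_of_pos (by linarith [hσ.1])
    simpa only [h] using hfar σ ⟨by linarith [hσ.1], hσ.2⟩ (by rw [h]; linarith [hσ.1])
  rw [← integral_add_adjacent_intervals (hint a (z.re - δ)) (hint _ b),
    ← integral_add_adjacent_intervals (hint (z.re - δ) (z.re + δ)) (hint _ b), ← add_assoc]
  exact norm_add₃_le.trans <| add_le_add (add_le_add hleft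
    (norm_integral_div_ofReal_sub_near_le hN hz hA hK hNK hδ.le)) hright

end

theorem norm_cpow_add_ofReal_sub_cpow_le {x : ℝ} (hx : 0 < x) (s : ℂ) {u : ℝ}
    (hu : |u * Real.log x| ≤ 1) :
    ‖(x : ℂ) ^ (s + u) - (x : ℂ) ^ s‖ ≤ 2 * x ^ s.re * |u * Real.log x| := by
  have hx0 : (x : ℂ) ≠ 0 := ofReal_ne_zero.2 hx.ne'
  have hexp : (x : ℂ) ^ (u : ℂ) = exp ((u * Real.log x : ℝ) : ℂ) := by
    rw [cpow_def_of_ne_zero hx0, ← ofReal_log hx.le]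
    push_cast
    ring_nf
  rw [cpow_add _ _ hx0, ← mul_sub_one, norm_mul, norm_cpow_eq_rpow_re_of_pos hx, hexp,
    mul_comm 2, mul_assoc]
  refine mul_le_mul_of_nonneg_left ?_ (by positivity)
  simpa using norm_exp_sub_one_le (x := ((u * Real.log x : ℝ) : ℂ)) (by simpa using hu)

theorem rpow_le_exp_one_mul {x σ : ℝ} (hx : 1 < x) (hσ : σ ≤ 1 + (Real.log x)⁻¹) :
    x ^ σ ≤ Real.exp 1 * x := by
  calc x ^ σ ≤ x ^ (1 + (Real.log x)⁻¹) := Real.rpow_le_rpow_of_exponent_le hx.le hσ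
    _ = Real.exp 1 * x := by
      rw [Real.rpow_add (by linarith), Real.rpow_one, Real.rpow_def_of_pos (by linarith),
        mul_inv_cancel₀ (Real.log_pos hx).ne', mul_comm]

theorem one_quarter_le_log_log_two_mul {x : ℝ} (hx : 2 ≤ x) :
    1 / 4 ≤ Real.log (Real.log (2 * x)) := by
  have hlog4 : 1.386 < Real.log (2 * x) := by
    calc (1.386 : ℝ) < 2 * Real.log 2 := by linarith [Real.log_two_gt_d9]
      _ = Real.log 4 := by rw [← Real.log_rpow two_pos]; norm_num
      _ ≤ Real.log (2 * x) := Real.log_le_log (by norm_num) (by linarith)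
  have hlog := Real.one_sub_inv_le_log_of_pos (x := Real.log (2 * x)) (by linarith)
  have hinv : (Real.log (2 * x))⁻¹ ≤ 1.386⁻¹ := inv_anti₀ (by norm_num) hlog4.le
  have : (1.386 : ℝ)⁻¹ ≤ 3 / 4 := by norm_num
  linarith

theorem log_log_add_one_le {x : ℝ} (hx : 2 ≤ x) :
    Real.log (Real.log x + 1) ≤ Real.log 2 + Real.log (Real.log (2 * x)) := by
  have hlog2 := Real.log_two_gt_d9
  have hlogx : Real.log 2 ≤ Real.log x := Real.log_le_log two_pos hx
  have h2x : Real.log (2 * x) = Real.log 2 + Real.log x := Real.log_mul two_ne_zero (by linarith)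
  calc Real.log (Real.log x + 1) ≤ Real.log (2 * Real.log (2 * x)) :=
        Real.log_le_log (by linarith) (by rw [h2x]; linarith)
    _ = Real.log 2 + Real.log (Real.log (2 * x)) :=
        Real.log_mul two_ne_zero (by rw [h2x]; linarith)

theorem two_mul_exp_one_mul_log_log_add_one_le {x : ℝ} (hx : 2 ≤ x) :
    2 * Real.exp 1 * Real.log (Real.log x + 1) + 2 * π + 4 ≤ 100 * Real.log (Real.log (2 * x)) := by
  have hLL := one_quarter_le_log_log_two_mul hx
  have hlog := log_log_add_one_le hx
  have hlog0 : 0 ≤ Real.log (Real.log x + 1) :=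
    Real.log_nonneg (by linarith [Real.log_nonneg (by linarith : (1 : ℝ) ≤ x)])
  have he := Real.exp_one_lt_d9
  have : Real.exp 1 * Real.log (Real.log x + 1) ≤ 3 * (1 + Real.log (Real.log (2 * x))) :=
    mul_le_mul (by linarith) (by linarith [Real.log_two_lt_d9]) hlog0 (by norm_num)
  linarith [Real.pi_le_four]

theorem norm_cpow_add_mul_I (x T σ : ℝ) (hx : 0 < x) :
    ‖(x : ℂ) ^ ((σ : ℂ) + T * I)‖ = x ^ σ := by
  simp [norm_cpow_eq_rpow_re_of_pos hx]

theorem norm_cpow_add_mul_I_sub_le {x : ℝ} (hx : 1 < x) (T : ℝ) {σ β : ℝ}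
    (hσ : |σ - β| ≤ (Real.log x)⁻¹) :
    ‖(x : ℂ) ^ ((σ : ℂ) + T * I) - (x : ℂ) ^ ((β : ℂ) + T * I)‖ ≤
      2 * x ^ β * Real.log x * |σ - β| := by
  have hL : 0 < Real.log x := Real.log_pos hx
  have hσβ : |(σ - β) * Real.log x| ≤ 1 := by
    rwa [abs_mul, abs_of_pos hL, ← le_div_iff₀ hL, one_div]
  have := norm_cpow_add_ofReal_sub_cpow_le (by linarith) ((β : ℂ) + T * I) hσβ
  rwa [show (β : ℂ) + T * I + ((σ - β : ℝ) : ℂ) = σ + T * I by push_cast; ring, add_re, ofReal_re,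
    re_ofReal_mul, I_re, mul_zero, add_zero, abs_mul, abs_of_pos hL, mul_comm |σ - β|,
    ← mul_assoc] at this

theorem norm_integral_cpow_add_mul_I_div_le {x : ℝ} (hx : 1 < x) (T : ℝ) {z : ℂ}
    (hz : z.im ≠ 0) (hz0 : 0 ≤ z.re) (hz1 : z.re ≤ 1) :
    ‖∫ σ in -(Real.log x)⁻¹..1 + (Real.log x)⁻¹, (x : ℂ) ^ ((σ : ℂ) + T * I) / ((σ : ℂ) - z)‖ ≤
      x * (2 * Real.exp 1 * Real.log (Real.log x + 1) + 2 * π + 4) := by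
  set L := Real.log x
  have hx0 : 0 < x := by linarith
  have hL : 0 < L := Real.log_pos hx
  have hpow_re : x ^ z.re ≤ x := by
    simpa using Real.rpow_le_rpow_of_exponent_le hx.le hz1
  have hbound := norm_integral_div_ofReal_sub_le (N := fun σ => (x : ℂ) ^ ((σ : ℂ) + T * I))
    (z := z) (a := -L⁻¹) (b := 1 + L⁻¹) (M := Real.exp 1 * x) (A := x) (K := 2 * x * L)
    (continuous_const.cpow (by fun_prop) fun _ => ofReal_mem_slitPlane.2 hx0) hz
    (fun σ hσ => (norm_cpow_add_mul_I x T σ hx0).trans_le (rpow_le_exp_one_mul hx hσ.2))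
    ((norm_cpow_add_mul_I x T _ hx0).trans_le hpow_re) (by positivity)
    (fun σ hσ => (norm_cpow_add_mul_I_sub_le hx T (abs_sub_le_iff.2
      ⟨by linarith [hσ.2], by linarith [hσ.1]⟩)).trans (by gcongr))
    (inv_pos.2 hL) (by linarith) (by linarith)
  have hratio : ∀ t, 0 ≤ t → t ≤ 1 →
      Real.exp 1 * x * Real.log ((t + L⁻¹) / L⁻¹) ≤ Real.exp 1 * x * Real.log (L + 1) :=
    fun t ht0 ht1 => by
      gcongr
      field_simp
      nlinarith
  rw [sub_neg_eq_add, show 1 + L⁻¹ - z.re = (1 - z.re) + L⁻¹ by ring] at hbound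
  calc _ ≤ _ := hbound
    _ ≤ Real.exp 1 * x * Real.log (L + 1) + (2 * π * x + 2 * L⁻¹ * (2 * x * L)) +
          Real.exp 1 * x * Real.log (L + 1) := by
        gcongr ?_ + _ + ?_
        · exact hratio _ hz0 hz1
        · exact hratio _ (by linarith) (by linarith)
    _ = x * (2 * Real.exp 1 * Real.log (L + 1) + 2 * π + 4) := by field_simp; ring

/-- There is an absolute constant `C > 0` such that for all `x ≥ 2` with
`c = 1 + 1/log x`, all real `T`, and all `ρ = β + iγ` with `0 ≤ β ≤ 1`, `|γ - T| < 1`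
and `γ ≠ T` (so that `ρ` is not on the segment), one has
`|∫_{1-c}^{c} x^{σ+iT}/(σ+iT-ρ) dσ| ≤ C x log log 2x`. -/
theorem segment_integral_estimate :
    ∃ C : ℝ, 0 < C ∧
      ∀ x T : ℝ, 2 ≤ x →
        ∀ ρ : ℂ, 0 ≤ ρ.re → ρ.re ≤ 1 → |ρ.im - T| < 1 → ρ.im ≠ T →
          ‖∫ σ in (1 - (1 + 1 / Real.log x))..(1 + 1 / Real.log x),
              (x : ℂ) ^ ((σ : ℂ) + T * I) / ((σ : ℂ) + T * I - ρ)‖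
            ≤ C * x * Real.log (Real.log (2 * x)) := by
  refine ⟨100, by norm_num, fun x T hx ρ hβ0 hβ1 _ hγT => ?_⟩
  have hz : (ρ - T * I).im ≠ 0 := by simpa [sub_eq_zero] using hγT
  have hbound := norm_integral_cpow_add_mul_I_div_le (x := x) (by linarith) T hz
    (by simpa using hβ0) (by simpa using hβ1)
  simp_rw [show ∀ σ : ℝ, (σ : ℂ) + T * I - ρ = σ - (ρ - T * I) from fun σ => by ring,
    show (1 : ℝ) - (1 + 1 / Real.log x) = -(Real.log x)⁻¹ by ring, one_div]
  calc _ ≤ _ := hbound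
    _ ≤ x * (100 * Real.log (Real.log (2 * x))) := by
        gcongr
        exact two_mul_exp_one_mul_log_log_add_one_le hx
    _ = 100 * x * Real.log (Real.log (2 * x)) := by ring
end

section
/- There is an absolute constant C > 0 such that for all real x ≥ 2, with c := 1 + 1/log x, one has ∑_{n≥2} Λ(n)/(n^c·log(n·x)) ≤ C. -/
open scoped Classical ArithmeticFunction

/-!
Since `log (n x) ≥ log x`, the sum is at most `(log x)⁻¹ ∑ Λ(n) n^(-σ)`, where
`σ = 1 + 1 / log x`.
The function `-ζ'/ζ(s) - 1/(s - 1)` extends continuously to `s = 1` (this is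
`LFunctionResidueClassAux` for the modulus `1`), hence is bounded by some `B` on the compact
interval `[1, 1 + 1 / log 2]`. So `∑ Λ(n) n^(-σ) ≤ 1/(σ - 1) + B = log x + B`, and the sum
is at most `1 + B / log x ≤ 1 + |B| / log 2`.
-/

lemma LSeries.term_ofReal_eq {f : ℕ → ℝ} {x : ℝ} (hx : x ≠ 0) (n : ℕ) :
    LSeries.term (fun n ↦ (f n : ℂ)) x n = ((f n / (n : ℝ) ^ x : ℝ) : ℂ) := by
  rcases eq_or_ne n 0 with rfl | hn
  · simp [Real.zero_rpow hx]
  · rw [LSeries.term_of_ne_zero hn, Complex.ofReal_div,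
      Complex.ofReal_cpow n.cast_nonneg, Complex.ofReal_natCast]

lemma LSeries_ofReal_eq {f : ℕ → ℝ} {x : ℝ} (hx : x ≠ 0) :
    LSeries (fun n ↦ (f n : ℂ)) x = ((∑' n, f n / (n : ℝ) ^ x : ℝ) : ℂ) := by
  simp_rw [LSeries, LSeries.term_ofReal_eq hx, Complex.ofReal_tsum]

namespace ArithmeticFunction.vonMangoldt

open Complex

variable {q : ℕ} [NeZero q] {a : ZMod q}

lemma tsum_residueClass_div_rpow_eq (ha : IsUnit a) {x : ℝ} (hx : 1 < x) :
    ∑' n, residueClass a n / (n : ℝ) ^ x =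
      (LFunctionResidueClassAux a x).re + (q.totient : ℝ)⁻¹ / (x - 1) := by
  have hL := eqOn_LFunctionResidueClassAux ha (show 1 < (x : ℂ).re by simpa)
  rw [LFunctionResidueClassAux_real ha hx] at hL
  simp only [LSeries_ofReal_eq (by positivity : x ≠ 0)] at hL
  apply ofReal_injective
  rw [ofReal_add, hL]
  push_cast
  ring

lemma exists_tsum_residueClass_div_rpow_le (ha : IsUnit a) (T : ℝ) :
    ∃ C : ℝ, ∀ x ∈ Set.Ioc 1 T,
      ∑' n, residueClass a n / (n : ℝ) ^ x ≤ (q.totient : ℝ)⁻¹ / (x - 1) + C := by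
  have hcont : ContinuousOn (fun x : ℝ ↦ (LFunctionResidueClassAux a x).re) (Set.Icc 1 T) :=
    continuous_re.comp_continuousOn <| (continuousOn_LFunctionResidueClassAux a).comp
      continuous_ofReal.continuousOn fun x hx ↦ by simpa using hx.1
  obtain ⟨C, hC⟩ := isCompact_Icc.bddAbove_image hcont
  refine ⟨C, fun x hx ↦ ?_⟩
  rw [tsum_residueClass_div_rpow_eq ha hx.1, add_comm]
  gcongr
  exact hC (Set.mem_image_of_mem _ (Set.Ioc_subset_Icc_self hx))

lemma residueClass_modOne (b : ZMod 1) : residueClass b = fun n ↦ vonMangoldt n :=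
  funext fun _ ↦
    Set.indicator_of_mem (s := {m : ℕ | (m : ZMod 1) = b}) (Subsingleton.elim _ _) _

lemma summable_div_rpow {x : ℝ} (hx : 1 < x) :
    Summable fun n : ℕ ↦ vonMangoldt n / (n : ℝ) ^ x := by
  simpa [residueClass_modOne] using LSeries.summable_real_of_abscissaOfAbsConv_lt
    ((abscissaOfAbsConv_residueClass_le_one (1 : ZMod 1)).trans_lt (mod_cast hx))

lemma exists_tsum_div_rpow_le (T : ℝ) :
    ∃ C : ℝ, ∀ x ∈ Set.Ioc 1 T, ∑' n : ℕ, vonMangoldt n / (n : ℝ) ^ x ≤ 1 / (x - 1) + C := by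
  simpa [residueClass_modOne] using
    exists_tsum_residueClass_div_rpow_le (isUnit_one (M := ZMod 1)) T

end ArithmeticFunction.vonMangoldt

lemma div_mul_log_mul_mem_Icc {a b m x : ℝ} (ha : 0 ≤ a) (hb : 0 < b) (hm : 1 ≤ m) (hx : 1 < x) :
    a / (b * Real.log (m * x)) ∈ Set.Icc 0 (a / b / Real.log x) := by
  have hlog : Real.log x ≤ Real.log (m * x) :=
    Real.log_le_log (by positivity) (le_mul_of_one_le_left (by positivity) hm)
  have hlogx := Real.log_pos hx
  have hlogmx := hlogx.trans_le hlog
  refine ⟨by positivity, ?_⟩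
  rw [div_div]
  gcongr

/-- There is an absolute constant `C > 0` such that for all `x ≥ 2`, with
`c = 1 + 1/log x`, one has `∑_{n ≥ 2} Λ(n)/(n^c log(nx)) ≤ C`. -/
theorem sum_vonMangoldt_div_log_le :
    ∃ C : ℝ, 0 < C ∧
      ∀ x : ℝ, 2 ≤ x →
        (∑' n : ℕ, if 2 ≤ n then
            Λ n / ((n : ℝ) ^ (1 + 1 / Real.log x) * Real.log (n * x)) else 0) ≤ C := by
  have hlog2 : 0 < Real.log 2 := Real.log_pos one_lt_two
  obtain ⟨B, hB⟩ := ArithmeticFunction.vonMangoldt.exists_tsum_div_rpow_le (1 + 1 / Real.log 2)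
  refine ⟨1 + |B| / Real.log 2, by positivity, fun x hx ↦ ?_⟩
  have hy : Real.log 2 ≤ Real.log x := Real.log_le_log two_pos hx
  have hy0 : 0 < Real.log x := hlog2.trans_le hy
  set σ := 1 + 1 / Real.log x
  have hσ : σ ∈ Set.Ioc 1 (1 + 1 / Real.log 2) :=
    ⟨lt_add_of_pos_right 1 (one_div_pos.mpr hy0), by simp only [σ]; gcongr⟩
  have hterm (n : ℕ) : (if 2 ≤ n then Λ n / ((n : ℝ) ^ σ * Real.log (n * x)) else 0) ∈
      Set.Icc 0 (Λ n / (n : ℝ) ^ σ / Real.log x) := by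
    split_ifs with hn
    · exact div_mul_log_mul_mem_Icc (by positivity)
        (Real.rpow_pos_of_pos (mod_cast (by omega : 0 < n)) σ) (mod_cast (by omega : 1 ≤ n))
        (by linarith)
    · exact ⟨le_rfl, div_nonneg (by positivity) hy0.le⟩
  have hsum := (ArithmeticFunction.vonMangoldt.summable_div_rpow hσ.1).div_const (Real.log x)
  calc _ ≤ ∑' n : ℕ, Λ n / (n : ℝ) ^ σ / Real.log x :=
        (hsum.of_nonneg_of_le (fun n ↦ (hterm n).1) (fun n ↦ (hterm n).2)).tsum_le_tsum
          (fun n ↦ (hterm n).2) hsum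
    _ = (∑' n : ℕ, Λ n / (n : ℝ) ^ σ) / Real.log x := tsum_div_const
    _ ≤ (Real.log x + B) / Real.log x := by
        gcongr
        simpa [σ] using hB σ hσ
    _ = 1 + B / Real.log x := by field_simp
    _ ≤ 1 + |B| / Real.log 2 := by gcongr; exact le_abs_self B
end
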